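/- Let p and N be integers with 1 ≤ p ≤ N, let α ∈ ℤ_p and β ∈ ℤ_N, and suppose θ := α/p − β/N is not an integer. Let χ̃_α : ℤ_N → ℂ be the extension by zero of the character χ_α(x) = e^{2πi·α·x/p} of ℤ_p (i.e., χ̃_α(x) = e^{2πi·α·x/p} for representatives 0 ≤ x < p and 0 otherwise). Then |χ̃_α^(β)| ≤ 1/(2·N·dist(θ, ℤ)), where dist(θ, ℤ) denotes the distance from θ to the nearest integer. -/

import Mathlib

/-- The Fourier transform on `ℤ_N`: `ĝ(β) = (1/N) Σ_x g(x)·e^{−2πi·β·x/N}`. -/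
noncomputable def dft {N : ℕ} [NeZero N] (g : ZMod N → ℂ) (b : ZMod N) : ℂ :=
  (N : ℂ)⁻¹ * ∑ x : ZMod N,
    g x * Complex.exp (-(2 * (Real.pi : ℂ) * Complex.I * (b.val : ℂ) * (x.val : ℂ) / (N : ℂ)))

/-- The extension by zero to `ℤ_N` of the character `χ_α(x) = e^{2πi·α·x/p}` of `ℤ_p`. -/
noncomputable def extChr (p N : ℕ) (a : ZMod p) : ZMod N → ℂ := fun x =>
  if x.val < p then
    Complex.exp (2 * (Real.pi : ℂ) * Complex.I * (a.val : ℂ) * (x.val : ℂ) / (p : ℂ))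
  else 0

/-- The frequency offset `θ = α/p − β/N`. -/
noncomputable def theta (p N : ℕ) (a : ZMod p) (b : ZMod N) : ℝ :=
  (a.val : ℝ) / p - (b.val : ℝ) / N


/-!
Summing the geometric series `∑_{x<p} e^{2πiθx}` shows `|χ̃_α^(β)| ≤ 2 / (N·|e^{2πiθ} − 1|)`,
and Jordan's inequality `|sin(πt)| ≥ 2|t|` for `|t| ≤ 1/2`, applied to `t = θ − round θ`,
gives `|e^{2πiθ} − 1| = 2|sin(πt)| ≥ 4·dist(θ, ℤ)`.
-/

open Complex Finset Real

theorem ZMod.sum_univ_val_eq_sum_range {M : Type*} [AddCommMonoid M] (N : ℕ) [NeZero N] (f : ℕ → M) :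
    ∑ x : ZMod N, f x.val = ∑ i ∈ range N, f i := by
  obtain ⟨n, rfl⟩ := Nat.exists_eq_succ_of_ne_zero (NeZero.ne N)
  exact Fin.sum_univ_eq_sum_range f _

theorem norm_geom_sum_le_of_norm_le_one {z : ℂ} (hz : ‖z‖ ≤ 1) (hz1 : z ≠ 1) (n : ℕ) :
    ‖∑ i ∈ range n, z ^ i‖ ≤ 2 / ‖z - 1‖ := by
  rw [geom_sum_eq hz1, norm_div]
  gcongr
  calc ‖z ^ n - 1‖ ≤ ‖z ^ n‖ + ‖(1 : ℂ)‖ := norm_sub_le _ _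
    _ ≤ 2 := by rw [norm_pow, norm_one]; linarith [pow_le_one₀ (norm_nonneg z) hz (n := n)]

theorem four_mul_abs_sub_round_le_norm_exp_sub_one (θ : ℝ) :
    4 * |θ - round θ| ≤ ‖exp (2 * π * θ * I) - 1‖ := by
  set t := θ - round θ
  have hexp : exp (2 * π * θ * I) = exp (I * ↑(2 * π * t)) := by
    have : (2 * π * θ * I : ℂ) = I * ↑(2 * π * t) + round θ * (2 * π * I) := by
      simp only [t]; push_cast; ring
    rw [this, Complex.exp_add, exp_int_mul_two_pi_mul_I, mul_one]
  have hjordan : 2 / π * |π * t| ≤ |Real.sin (π * t)| := by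
    refine Real.mul_abs_le_abs_sin ?_
    rw [abs_mul, abs_of_pos pi_pos]
    nlinarith [abs_sub_round θ, pi_pos]
  rw [hexp, norm_exp_I_mul_ofReal_sub_one, norm_mul, Real.norm_eq_abs, Real.norm_eq_abs,
    abs_two, show 2 * π * t / 2 = π * t by ring]
  rw [abs_mul, abs_of_pos pi_pos] at hjordan
  calc 4 * |t| = 2 * (2 / π * (π * |t|)) := by field_simp; ring
    _ ≤ 2 * |Real.sin (π * t)| := by gcongr

theorem dft_extChr_eq {p N : ℕ} [NeZero N] (hpN : p ≤ N) (α : ZMod p) (β : ZMod N) :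
    dft (extChr p N α) β = (N : ℂ)⁻¹ * ∑ i ∈ range p, exp (2 * π * theta p N α β * I) ^ i := by
  have hterm : ∀ i < p,
      exp (2 * π * I * α.val * i / p) * exp (-(2 * π * I * β.val * i / N)) =
        exp (2 * π * theta p N α β * I) ^ i := by
    intro i hi
    have hp : (p : ℂ) ≠ 0 := by exact_mod_cast (i.zero_le.trans_lt hi).ne'
    have hN : (N : ℂ) ≠ 0 := by exact_mod_cast NeZero.ne N
    rw [← Complex.exp_nat_mul, ← Complex.exp_add, theta]
    congr 1
    push_cast
    field_simp
    ring
  have hfilter : (range N).filter (· < p) = range p := by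
    ext i; simp only [mem_filter, mem_range]; omega
  unfold dft extChr
  rw [ZMod.sum_univ_val_eq_sum_range N fun i => (if i < p then exp (2 * π * I * α.val * i / p) else 0) *
      exp (-(2 * π * I * β.val * i / N))]
  simp only [ite_mul, zero_mul, sum_ite, sum_const_zero, add_zero, hfilter]
  exact congrArg _ (sum_congr rfl fun i hi => hterm i (mem_range.mp hi))

theorem stmt10_general (p N : ℕ) [NeZero N] (hpN : p ≤ N)
    (α : ZMod p) (β : ZMod N)
    (hθ : ∀ k : ℤ, theta p N α β ≠ (k : ℝ)) :
    ‖dft (extChr p N α) β‖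
      ≤ 1 / (2 * (N : ℝ) * |theta p N α β - round (theta p N α β)|) := by
  set θ := theta p N α β
  set z := exp (2 * π * θ * I)
  have hz : ‖z‖ = 1 := by simp [z, Complex.norm_exp]
  have ht : 0 < |θ - round θ| := abs_pos.2 (sub_ne_zero.2 (hθ _))
  have hden : 4 * |θ - round θ| ≤ ‖z - 1‖ := four_mul_abs_sub_round_le_norm_exp_sub_one θ
  have hz1 : z ≠ 1 := by
    rintro h
    rw [h, sub_self, norm_zero] at hden
    linarith
  have hN : (0 : ℝ) < N := by exact_mod_cast Nat.pos_of_ne_zero (NeZero.ne N)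
  rw [dft_extChr_eq hpN, norm_mul, norm_inv, Complex.norm_natCast]
  calc (N : ℝ)⁻¹ * ‖∑ i ∈ range p, z ^ i‖ ≤ (N : ℝ)⁻¹ * (2 / ‖z - 1‖) := by
        gcongr; exact norm_geom_sum_le_of_norm_le_one hz.le hz1 p
    _ ≤ (N : ℝ)⁻¹ * (2 / (4 * |θ - round θ|)) := by gcongr
    _ = 1 / (2 * N * |θ - round θ|) := by field_simp; ring

/-- Decay estimate for the Fourier coefficients of a modulus-switched character:
`|χ̃_α^(β)| ≤ 1/(2N·dist(θ,ℤ))` where `θ = α/p − β/N` is not an integer. -/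
theorem stmt10 (p N : ℕ) [NeZero p] [NeZero N] (hp : 1 ≤ p) (hpN : p ≤ N)
    (α : ZMod p) (β : ZMod N)
    (hθ : ∀ k : ℤ, theta p N α β ≠ (k : ℝ)) :
    ‖dft (extChr p N α) β‖
      ≤ 1 / (2 * (N : ℝ) * |theta p N α β - round (theta p N α β)|) :=
  stmt10_general p N hpN α β hθ
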